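/- arXiv:1109.6261 — 6 statements merged into one kernel-verified Lean document; each statement's English description precedes it below -/
import Mathlib

section
/- For every integer k ≥ 1, every ℓ ∈ ℤ, and all vectors m, n ∈ ℤ_{≥0}^k, the quadratic form satisfies Q(m,n) = ¼·Σ_{j=0}^{k−1} ( (q_j − q_{j+1})² − (Σ_{i=j+1}^{k} n_i)² ). -/
/-!
# Statement 2: the quadratic form identity for A₁

`Q(m,n) = ¼ Σ_{j=0}^{k−1} ((q_j − q_{j+1})² − (Σ_{i=j+1}^{k} n_i)²)` in ℚ.
-/

open scoped BigOperators

noncomputable section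

/-- `p_j = Σ_{i=1}^{k} min(i,j)(n_i − 2 m_i)` (indices of `n`, `m` are 1-based via `Fin k`);
with this convention `p_0 = 0`. -/
def pP (k : ℕ) (n m : Fin k → ℕ) (j : ℕ) : ℤ :=
  ∑ i : Fin k, (min ((i : ℕ) + 1) j : ℤ) * ((n i : ℤ) - 2 * (m i : ℤ))

/-- `q₀ = ℓ − p_k = ℓ + Σ_i i (2 m_i − n_i)`. -/
def q0 (k : ℕ) (ℓ : ℤ) (n m : Fin k → ℕ) : ℤ := ℓ - pP k n m k

/-- `q_j = q₀ + p_j` for `0 ≤ j ≤ k`. -/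
def qSeq (k : ℕ) (ℓ : ℤ) (n m : Fin k → ℕ) (j : ℕ) : ℤ := q0 k ℓ n m + pP k n m j

/-- The quadratic form `Q(m,n) = Σ_{i,j=1}^{k} m_i · min(i,j) · (m_j − n_j)`. -/
def Qquad (k : ℕ) (n m : Fin k → ℕ) : ℤ :=
  ∑ i : Fin k, ∑ j : Fin k,
    (m i : ℤ) * (min ((i : ℕ) + 1) ((j : ℕ) + 1) : ℤ) * ((m j : ℤ) - (n j : ℤ))

lemma qdiff (k : ℕ) (ℓ : ℤ) (n m : Fin k → ℕ) (j : ℕ) :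
    qSeq k ℓ n m j - qSeq k ℓ n m (j+1)
      = ∑ i ∈ Finset.univ.filter (fun i : Fin k => j ≤ (i:ℕ)), (2 * (m i : ℤ) - n i) := by
  simp only [qSeq, pP]
  rw [add_sub_add_left_eq_sub, ← Finset.sum_sub_distrib, Finset.sum_filter]
  apply Finset.sum_congr rfl
  intro i _
  by_cases h : j ≤ (i : ℕ)
  · have h1 : min (((i:ℕ):ℤ)+1) (j:ℤ) = (j:ℤ) := by omega
    have h2 : min (((i:ℕ):ℤ)+1) ((j:ℤ)+1) = (j:ℤ)+1 := by push_cast; omega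
    rw [if_pos h]
    push_cast [h1, h2]
    ring
  · have h1 : min (((i:ℕ):ℤ)+1) (j:ℤ) = ((i:ℕ):ℤ)+1 := by omega
    have h2 : min (((i:ℕ):ℤ)+1) ((j:ℤ)+1) = ((i:ℕ):ℤ)+1 := by push_cast; omega
    rw [if_neg h]
    push_cast [h1, h2]
    ring

lemma key (k : ℕ) (n m : Fin k → ℕ) :
    Qquad k n m = ∑ j ∈ Finset.range k,
      (∑ i ∈ Finset.univ.filter (fun i : Fin k => j ≤ (i:ℕ)), (m i : ℤ)) *
      (∑ i ∈ Finset.univ.filter (fun i : Fin k => j ≤ (i:ℕ)), ((m i : ℤ) - n i)) := by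
  have step : ∀ j, (∑ i ∈ Finset.univ.filter (fun i : Fin k => j ≤ (i:ℕ)), (m i : ℤ)) *
      (∑ i ∈ Finset.univ.filter (fun i : Fin k => j ≤ (i:ℕ)), ((m i : ℤ) - n i))
      = ∑ i : Fin k, ∑ i' : Fin k,
        if j ≤ (i:ℕ) ∧ j ≤ (i':ℕ) then (m i : ℤ) * ((m i' : ℤ) - n i') else 0 := by
    intro j
    rw [Finset.sum_mul_sum, Finset.sum_filter]
    apply Finset.sum_congr rfl
    intro i _
    by_cases h : j ≤ (i:ℕ)
    · rw [if_pos h, Finset.sum_filter]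
      apply Finset.sum_congr rfl
      intro i' _
      by_cases h' : j ≤ (i':ℕ) <;> simp [h, h']
    · rw [if_neg h]
      symm
      apply Finset.sum_eq_zero
      intro i' _
      simp [h]
  simp only [step]
  rw [Finset.sum_comm]
  unfold Qquad
  apply Finset.sum_congr rfl
  intro i _
  rw [Finset.sum_comm]
  apply Finset.sum_congr rfl
  intro i' _
  have hf : (Finset.range k).filter (fun j => j ≤ (i:ℕ) ∧ j ≤ (i':ℕ))
      = Finset.range (min (i:ℕ) (i':ℕ) + 1) := by
    ext j
    simp only [Finset.mem_filter, Finset.mem_range]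
    have := i.isLt; have := i'.isLt
    omega
  rw [← Finset.sum_filter, hf, Finset.sum_const, Finset.card_range]
  have hmin : min (((i:ℕ):ℤ)+1) (((i':ℕ):ℤ)+1) = ((min (i:ℕ) (i':ℕ) + 1 : ℕ) : ℤ) := by
    push_cast; omega
  rw [hmin, nsmul_eq_mul]
  push_cast
  ring

/-- **The quadratic form identity.** For every `k ≥ 1`, `ℓ ∈ ℤ` and all `m, n ∈ ℤ_{≥0}^k`,
`Q(m,n) = ¼ Σ_{j=0}^{k−1} ((q_j − q_{j+1})² − (Σ_{i=j+1}^{k} n_i)²)` holds in ℚ. -/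
theorem Qquad_eq (k : ℕ) (hk : 1 ≤ k) (ℓ : ℤ) (n m : Fin k → ℕ) :
    (Qquad k n m : ℚ) =
      (1 / 4) * ∑ j ∈ Finset.range k,
        (((qSeq k ℓ n m j - qSeq k ℓ n m (j + 1) : ℤ) : ℚ) ^ 2 -
          ((∑ i ∈ Finset.univ.filter (fun i : Fin k => j ≤ (i : ℕ)), (n i : ℤ) : ℤ) : ℚ) ^ 2) := by
  rw [key k n m]
  rw [Finset.mul_sum]
  push_cast
  apply Finset.sum_congr rfl
  intro j _
  rw [← Int.cast_sub, qdiff k ℓ n m j]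
  push_cast
  rw [Finset.sum_sub_distrib, Finset.sum_sub_distrib, ← Finset.mul_sum]
  ring


end
end

section
/- For every integer k ≥ 1, every ℓ ∈ ℤ^r, and all arrays m, n ∈ ℤ_{≥0}^{r×k}, the quadratic form satisfies Q(m,n) = (1/(2δ))·Σ_{j=1}^{k} ( (q_{j−1} − q_j)ᵀ λ (q_{j−1} − q_j) − N_jᵀ λ N_j ), where q_j := (q_{α,j})_{α} ∈ ℤ^r (with q_{α,k+1} := q_{α,k}) and N_j := (Σ_{i=j}^{k} n_{α,i})_{α} ∈ ℤ^r. -/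
/-!
Write `M_s, N_s ∈ ℤ^r` for the tail sums `Σ_{i ≥ s} m_{·,i}` and `Σ_{i ≥ s} n_{·,i}`. Since
`min(i,j) = #{1 ≤ s ≤ k : s ≤ i, s ≤ j}`, the form is `Q(m,n) = Σ_s (½ M_sᵀ C M_s − M_sᵀ N_s)`.
On the other side `q_{s−1} − q_s = C M_s − N_s`, and for symmetric `C` the relations
`λ C = C λ = δ` give `(C M − N)ᵀ λ (C M − N) − Nᵀ λ N = δ (Mᵀ C M − 2 Mᵀ N)`.
-/

open scoped BigOperators

noncomputable section

/-- `p_{α,j} = Σ_{i=1}^k min(i,j) (n_{α,i} − Σ_β C_{αβ} m_{β,i})`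
(the indices `i` of `n`, `m` are 1-based via `Fin k`); with this convention `p_{α,0} = 0`. -/
def pSL (r k : ℕ) (C : Matrix (Fin r) (Fin r) ℤ) (n m : Fin r → Fin k → ℕ)
    (α : Fin r) (j : ℕ) : ℤ :=
  ∑ i : Fin k, (min ((i : ℕ) + 1) j : ℤ) *
    ((n α i : ℤ) - ∑ β : Fin r, C α β * (m β i : ℤ))

/-- `q_{α,j} = q_{α,0} + p_{α,j}` where `q_{α,0} = ℓ_α − p_{α,k}`; this is valid for all
`j ∈ ℤ_{≥0}` and automatically satisfies `q_{α,j} = q_{α,k}` for `j ≥ k`. -/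
def qSL (r k : ℕ) (C : Matrix (Fin r) (Fin r) ℤ) (ℓ : Fin r → ℤ)
    (n m : Fin r → Fin k → ℕ) (j : ℕ) (α : Fin r) : ℤ :=
  ℓ α - pSL r k C n m α k + pSL r k C n m α j

/-- `N_j = (Σ_{i=j}^{k} n_{α,i})_α ∈ ℤ^r`. -/
def NSL (r k : ℕ) (n : Fin r → Fin k → ℕ) (j : ℕ) (α : Fin r) : ℤ :=
  ∑ i ∈ Finset.univ.filter (fun i : Fin k => j ≤ (i : ℕ) + 1), (n α i : ℤ)

/-- The bilinear form `x ᵀ λ y` with `λ = adjugate C = (det C) C⁻¹`, as a rational number. -/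
def lamForm (r : ℕ) (C : Matrix (Fin r) (Fin r) ℤ) (x y : Fin r → ℤ) : ℚ :=
  ∑ α : Fin r, ∑ β : Fin r, (x α : ℚ) * (C.adjugate α β : ℚ) * (y β : ℚ)

namespace Matrix

open Finset

variable {n R : Type*} [Fintype n] [DecidableEq n] [CommRing R]

theorem IsSymm.dotProduct_adjugate_mulVec_sub {A : Matrix n n R} (hA : A.IsSymm) (M N : n → R) :
    (A *ᵥ M - N) ⬝ᵥ A.adjugate *ᵥ (A *ᵥ M - N) - N ⬝ᵥ A.adjugate *ᵥ N
      = A.det * (M ⬝ᵥ A *ᵥ M - 2 * (M ⬝ᵥ N)) := by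
  have hadj : A.adjugate *ᵥ (A *ᵥ M) = A.det • M := by
    rw [mulVec_mulVec, adjugate_mul, smul_mulVec, one_mulVec]
  have hmul : A *ᵥ (A.adjugate *ᵥ N) = A.det • N := by
    rw [mulVec_mulVec, mul_adjugate, smul_mulVec, one_mulVec]
  have hAM : ∀ w, (A *ᵥ M) ⬝ᵥ w = M ⬝ᵥ A *ᵥ w := fun w => by
    rw [← vecMul_transpose, hA.eq, dotProduct_mulVec]
  rw [mulVec_sub, hadj, sub_dotProduct, hAM, mulVec_sub, mulVec_smul, hmul]
  simp only [dotProduct_sub, dotProduct_smul, smul_eq_mul, dotProduct_comm N M]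
  ring

theorem det_ne_zero_of_forall_quadForm_pos {R : Type*} [CommRing R] [LinearOrder R]
    [IsStrictOrderedRing R] {A : Matrix n n R}
    (hA : ∀ v : n → R, v ≠ 0 → 0 < ∑ α, ∑ β, v α * A α β * v β) : A.det ≠ 0 := by
  intro hdet
  obtain ⟨v, hv, hAv⟩ := exists_mulVec_eq_zero_iff.mpr hdet
  have hzero : ∑ α, ∑ β, v α * A α β * v β = 0 := by
    simpa only [dotProduct, mulVec, mul_sum, mul_assoc, Pi.zero_apply, mul_zero,
      sum_const_zero] using congrArg (v ⬝ᵥ ·) hAv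
  exact (hA v hv).ne' hzero

end Matrix

section TailSum

open Finset Matrix

variable {k : ℕ}

/-- `tailSum x j = Σ_{i=j}^{k} x_i` in the 1-based indexing of `pSL`. -/
def tailSum {R : Type*} [AddCommMonoid R] (x : Fin k → R) (j : ℕ) : R :=
  ∑ i ∈ univ.filter (fun i : Fin k => j ≤ (i : ℕ) + 1), x i

variable {R : Type*} [CommSemiring R]

theorem sum_Icc_tailSum_mul_tailSum (u v : Fin k → R) :
    ∑ j ∈ Icc 1 k, tailSum u j * tailSum v j
      = ∑ i : Fin k, ∑ i' : Fin k, u i * v i' * ((min ((i : ℕ) + 1) ((i' : ℕ) + 1) : ℕ) : R) := by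
  have hcount : ∀ i i' : Fin k, ∑ j ∈ Icc 1 k,
      (if j ≤ (i : ℕ) + 1 then u i else 0) * (if j ≤ (i' : ℕ) + 1 then v i' else 0)
        = u i * v i' * ((min ((i : ℕ) + 1) ((i' : ℕ) + 1) : ℕ) : R) := by
    intro i i'
    have hfilter : (Icc 1 k).filter (fun j => j ≤ (i : ℕ) + 1 ∧ j ≤ (i' : ℕ) + 1)
        = Icc 1 (min ((i : ℕ) + 1) ((i' : ℕ) + 1)) := by
      ext j; simp only [mem_filter, mem_Icc, le_min_iff]; omega
    simp only [ite_zero_mul_ite_zero]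
    rw [← sum_filter, hfilter, sum_const, Nat.card_Icc, nsmul_eq_mul, mul_comm]
    simp
  simp only [tailSum, sum_filter, sum_mul_sum]
  rw [sum_comm]
  refine sum_congr rfl fun i _ => ?_
  rw [sum_comm]
  exact sum_congr rfl fun i' _ => hcount i i'

theorem sum_Icc_tailSum_dotProduct {r : ℕ} (x y : Fin r → Fin k → R) :
    ∑ j ∈ Icc 1 k, (fun α => tailSum (x α) j) ⬝ᵥ (fun α => tailSum (y α) j)
      = ∑ α, ∑ i : Fin k, ∑ i' : Fin k,
          x α i * ((min ((i : ℕ) + 1) ((i' : ℕ) + 1) : ℕ) : R) * y α i' := by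
  simp only [dotProduct]
  rw [sum_comm]
  refine sum_congr rfl fun α _ => ?_
  rw [sum_Icc_tailSum_mul_tailSum]
  exact sum_congr rfl fun i _ => sum_congr rfl fun i' _ => by ring

theorem sum_Icc_tailSum_dotProduct_mulVec {r : ℕ} (A : Matrix (Fin r) (Fin r) R)
    (x : Fin r → Fin k → R) :
    ∑ j ∈ Icc 1 k, (fun α => tailSum (x α) j) ⬝ᵥ A *ᵥ (fun α => tailSum (x α) j)
      = ∑ α, ∑ β, ∑ i : Fin k, ∑ i' : Fin k,
          x α i * A α β * ((min ((i : ℕ) + 1) ((i' : ℕ) + 1) : ℕ) : R) * x β i' := by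
  simp only [dotProduct, mulVec, mul_sum]
  rw [sum_comm]
  refine sum_congr rfl fun α _ => ?_
  rw [sum_comm]
  refine sum_congr rfl fun β _ => ?_
  simp only [mul_left_comm (tailSum (x α) _)]
  rw [← mul_sum, sum_Icc_tailSum_mul_tailSum, mul_sum]
  exact sum_congr rfl fun i _ => by rw [mul_sum]; exact sum_congr rfl fun i' _ => by ring

end TailSum

open Matrix

theorem pSL_sub_pSL_pred {r k : ℕ} (C : Matrix (Fin r) (Fin r) ℤ) (n m : Fin r → Fin k → ℕ)
    (α : Fin r) {j : ℕ} (hj : 1 ≤ j) :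
    pSL r k C n m α j - pSL r k C n m α (j - 1)
      = tailSum (fun i => (n α i : ℤ) - ∑ β, C α β * (m β i : ℤ)) j := by
  -- `min(i, j) − min(i, j − 1)` is `1` for `j ≤ i` and `0` otherwise
  rw [pSL, pSL, ← Finset.sum_sub_distrib, tailSum, Finset.sum_filter]
  refine Finset.sum_congr rfl fun i _ => ?_
  split_ifs with h
  · rw [min_eq_right (by omega), min_eq_right (by omega)]; push_cast [hj]; ring
  · rw [min_eq_left (by omega), min_eq_left (by omega)]; ring

theorem qSL_pred_sub_qSL {r k : ℕ} (C : Matrix (Fin r) (Fin r) ℤ) (ℓ : Fin r → ℤ)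
    (n m : Fin r → Fin k → ℕ) {j : ℕ} (hj : 1 ≤ j) :
    (fun α => qSL r k C ℓ n m (j - 1) α - qSL r k C ℓ n m j α)
      = C *ᵥ (fun β => tailSum (fun i => (m β i : ℤ)) j) - NSL r k n j := by
  ext α
  have hp := pSL_sub_pSL_pred C n m α hj
  simp only [tailSum, Finset.sum_sub_distrib] at hp
  rw [Finset.sum_comm] at hp
  simp only [qSL, NSL, tailSum, Pi.sub_apply, mulVec, dotProduct, Finset.mul_sum]
  linarith

theorem lamForm_eq_dotProduct (r : ℕ) (C : Matrix (Fin r) (Fin r) ℤ) (x y : Fin r → ℤ) :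
    lamForm r C x y = ((x ⬝ᵥ C.adjugate *ᵥ y : ℤ) : ℚ) := by
  simp only [lamForm, dotProduct, mulVec, Finset.mul_sum]
  push_cast
  exact Finset.sum_congr rfl fun α _ => Finset.sum_congr rfl fun β _ => by ring

theorem QSL_eq_general (r k : ℕ)
    (C : Matrix (Fin r) (Fin r) ℤ)
    (hsym : C.IsSymm)
    (hpos : ∀ v : Fin r → ℤ, v ≠ 0 → 0 < ∑ α, ∑ β, v α * C α β * v β)
    (ℓ : Fin r → ℤ) (n m : Fin r → Fin k → ℕ) :
    ((1 : ℚ) / 2) * ∑ α : Fin r, ∑ β : Fin r, ∑ i : Fin k, ∑ j : Fin k,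
        ((m α i : ℤ) : ℚ) * (C α β : ℚ) * ((min ((i : ℕ) + 1) ((j : ℕ) + 1) : ℕ) : ℚ) *
          ((m β j : ℤ) : ℚ)
      - ∑ α : Fin r, ∑ i : Fin k, ∑ j : Fin k,
        ((m α i : ℤ) : ℚ) * ((min ((i : ℕ) + 1) ((j : ℕ) + 1) : ℕ) : ℚ) * ((n α j : ℤ) : ℚ) =
    (1 / (2 * (C.det : ℚ))) * ∑ j ∈ Finset.Icc 1 k,
      (lamForm r C (fun α => qSL r k C ℓ n m (j - 1) α - qSL r k C ℓ n m j α)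
          (fun α => qSL r k C ℓ n m (j - 1) α - qSL r k C ℓ n m j α)
        - lamForm r C (NSL r k n j) (NSL r k n j)) := by
  have hdet : (C.det : ℚ) ≠ 0 := Int.cast_ne_zero.mpr (det_ne_zero_of_forall_quadForm_pos hpos)
  set M : ℕ → Fin r → ℤ := fun j α => tailSum (fun i => (m α i : ℤ)) j
  set N : ℕ → Fin r → ℤ := fun j α => tailSum (fun i => (n α i : ℤ)) j
  have hsummand : ∀ j ∈ Finset.Icc 1 k,
      lamForm r C (fun α => qSL r k C ℓ n m (j - 1) α - qSL r k C ℓ n m j α)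
          (fun α => qSL r k C ℓ n m (j - 1) α - qSL r k C ℓ n m j α)
        - lamForm r C (NSL r k n j) (NSL r k n j)
      = (C.det : ℚ) * (((M j ⬝ᵥ C *ᵥ M j : ℤ) : ℚ) - 2 * ((M j ⬝ᵥ N j : ℤ) : ℚ)) := by
    intro j hj
    rw [lamForm_eq_dotProduct, lamForm_eq_dotProduct,
      qSL_pred_sub_qSL C ℓ n m (Finset.mem_Icc.mp hj).1, ← Int.cast_sub,
      hsym.dotProduct_adjugate_mulVec_sub]
    push_cast
    rfl
  rw [Finset.sum_congr rfl hsummand, ← Finset.mul_sum, Finset.sum_sub_distrib, ← Finset.mul_sum,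
    ← Int.cast_sum, ← Int.cast_sum, sum_Icc_tailSum_dotProduct_mulVec,
    sum_Icc_tailSum_dotProduct]
  -- otherwise `push_cast` rewrites `↑C.det` as the determinant of the cast matrix
  generalize (C.det : ℚ) = δ at hdet ⊢
  push_cast
  field_simp

/-- **The quadratic form identity (simply-laced case).** Let `C` be the Cartan matrix of a
simply-laced simple Lie algebra of rank `r`, `δ = det C`, `λ = δ C⁻¹ = adjugate C`. Then for
every `k ≥ 1`, `ℓ ∈ ℤ^r` and all `m, n ∈ ℤ_{≥0}^{r×k}`,
`Q(m,n) = (1/(2δ)) Σ_{j=1}^{k} ((q_{j−1} − q_j)ᵀ λ (q_{j−1} − q_j) − N_jᵀ λ N_j)`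
holds in ℚ, where
`Q(m,n) = ½ Σ_{α,β,i,j} m_{α,i} C_{αβ} min(i,j) m_{β,j} − Σ_{α,i,j} m_{α,i} min(i,j) n_{α,j}`. -/
theorem QSL_eq (r k : ℕ) (hr : 1 ≤ r) (hk : 1 ≤ k)
    (C : Matrix (Fin r) (Fin r) ℤ)
    (hsym : C.IsSymm)
    (hdiag : ∀ α, C α α = 2)
    (hoff : ∀ α β, α ≠ β → C α β = 0 ∨ C α β = -1)
    (hpos : ∀ v : Fin r → ℤ, v ≠ 0 → 0 < ∑ α, ∑ β, v α * C α β * v β)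
    (hconn : ∀ α β : Fin r, Relation.ReflTransGen (fun a b => C a b = -1) α β)
    (ℓ : Fin r → ℤ) (n m : Fin r → Fin k → ℕ) :
    ((1 : ℚ) / 2) * ∑ α : Fin r, ∑ β : Fin r, ∑ i : Fin k, ∑ j : Fin k,
        ((m α i : ℤ) : ℚ) * (C α β : ℚ) * ((min ((i : ℕ) + 1) ((j : ℕ) + 1) : ℕ) : ℚ) *
          ((m β j : ℤ) : ℚ)
      - ∑ α : Fin r, ∑ i : Fin k, ∑ j : Fin k,
        ((m α i : ℤ) : ℚ) * ((min ((i : ℕ) + 1) ((j : ℕ) + 1) : ℕ) : ℚ) * ((n α j : ℤ) : ℚ) =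
    (1 / (2 * (C.det : ℚ))) * ∑ j ∈ Finset.Icc 1 k,
      (lamForm r C (fun α => qSL r k C ℓ n m (j - 1) α - qSL r k C ℓ n m j α)
          (fun α => qSL r k C ℓ n m (j - 1) α - qSL r k C ℓ n m j α)
        - lamForm r C (NSL r k n j) (NSL r k n j)) :=
  QSL_eq_general r k C hsym hpos ℓ n m

end
end

section
/- Within each valid initial data set indexed by a generalized Motzkin path, the solutions of the quantum Q-system t-commute: for every vector m⃗ = (m⃗_1,…,m⃗_r) ∈ ℤ^r satisfying |m⃗_α − m⃗_β| ≤ 1 whenever C_{αβ} = −1, and for all α, β ∈ {1,…,r} and all ε, ε' ∈ {0,1}, one has Q_{α, m⃗_α+ε} · Q_{β, m⃗_β+ε'} = t^{λ_{αβ}·((m⃗_β+ε') − (m⃗_α+ε))} · Q_{β, m⃗_β+ε'} · Q_{α, m⃗_α+ε}. -/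
/-!
Walk a generalized Motzkin path back to `m⃗ = 0`, lowering `|m⃗_α|` by one at a node `α` where it
is maximal: the path stays Motzkin, and the neighbours of `α` sit between the old and the new
value of `m⃗_α`. Each such move trades one variable of the initial data for the one determined
by the Q-system relation `Q_{α,n+1} Q_{α,n-1} = t^{-λ_{αα}} (Q_{α,n}² − ∏_{γ∼α} Q_{γ,n})`.
Both terms on the right `t`-commute with every other variable `Q_{β,b}` of the data with the
same exponent `2 λ_{αβ} (b − n)`, because `(C λ)_{αβ} = 0` for `α ≠ β` says exactly
`Σ_{γ∼α} λ_{γβ} = 2 λ_{αβ}`; dividing by the known unit factor gives the relation for the new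
variable.
-/

open scoped BigOperators

/-- The ordered product `∏_{β : C_{αβ} = −1} Q_{β,n}` (taken in increasing order of `β`;
in any model the factors commute, so the order is immaterial). -/
def nbrProd {R : Type*} [Ring R] {r : ℕ} (C : Matrix (Fin r) (Fin r) ℤ)
    (Q : Fin r → ℤ → R) (α : Fin r) (n : ℤ) : R :=
  (((Finset.univ.filter (fun β => C α β = -1)).sort (· ≤ ·)).map (fun β => Q β n)).prod

open Finset Function

section

variable {R : Type*} [Ring R] {r : ℕ}

def TCommute (t : Rˣ) (e : ℤ) (x y : R) : Prop :=
  x * y = ((t ^ e : Rˣ) : R) * (y * x)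

namespace TCommute

variable {t : Rˣ} {e f : ℤ} {x y z : R}

theorem refl (x : R) : TCommute t 0 x x := by
  simp [TCommute]

theorem symm (h : TCommute t e x y) : TCommute t (-e) y x := by
  rw [TCommute, h, ← mul_assoc, ← Units.val_mul, ← zpow_add, neg_add_cancel, zpow_zero,
    Units.val_one, one_mul]

theorem sub_left (hx : TCommute t e x z) (hy : TCommute t e y z) : TCommute t e (x - y) z := by
  rw [TCommute, sub_mul, hx, hy, mul_sub, mul_sub]

variable (ht : ∀ a : R, Commute (t : R) a)
include ht

theorem mul_left (hx : TCommute t e x z) (hy : TCommute t f y z) :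
    TCommute t (e + f) (x * y) z := by
  unfold TCommute at *
  calc x * y * z = ((t ^ f : Rˣ) : R) * (x * z * y) := by
        rw [mul_assoc, hy, ← mul_assoc, ← ((ht x).units_zpow_left f).eq]
        simp only [mul_assoc]
    _ = ((t ^ f : Rˣ) : R) * (((t ^ e : Rˣ) : R) * (z * (x * y))) := by
        rw [hx]
        simp only [mul_assoc]
    _ = ((t ^ (e + f) : Rˣ) : R) * (z * (x * y)) := by
        rw [← mul_assoc, ← Units.val_mul, ← zpow_add, add_comm]

theorem units_zpow_mul_left_iff (c : ℤ) :
    TCommute t e (((t ^ c : Rˣ) : R) * x) z ↔ TCommute t e x z := by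
  have hc : ∀ a : R, Commute ((t ^ c : Rˣ) : R) a := fun a => (ht a).units_zpow_left c
  unfold TCommute
  rw [mul_assoc, ← mul_assoc z, ← (hc z).eq, mul_assoc, ← (hc _).left_comm,
    Units.mul_right_inj]

theorem units_inv_left {u : Rˣ} (h : TCommute t e (u : R) z) :
    TCommute t (-e) ((u⁻¹ : Rˣ) : R) z := by
  have h' : z * ((u⁻¹ : Rˣ) : R) = ((t ^ e : Rˣ) : R) * (((u⁻¹ : Rˣ) : R) * z) := by
    calc z * ((u⁻¹ : Rˣ) : R) = ((u⁻¹ : Rˣ) : R) * ((u : R) * z) * ((u⁻¹ : Rˣ) : R) := by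
          rw [← mul_assoc, Units.inv_mul, one_mul]
      _ = ((t ^ e : Rˣ) : R) * (((u⁻¹ : Rˣ) : R) * z) := by
          rw [h, ← ((ht _).units_zpow_left e).left_comm]
          simp [mul_assoc]
  rw [TCommute, h', ← mul_assoc, ← Units.val_mul, ← zpow_add, neg_add_cancel, zpow_zero,
    Units.val_one, one_mul]

theorem of_mul_of_isUnit_right (hy : IsUnit y) (hxy : TCommute t e (x * y) z)
    (hyz : TCommute t f y z) : TCommute t (e - f) x z := by
  obtain ⟨u, rfl⟩ := hy
  simpa [sub_eq_add_neg, mul_assoc] using hxy.mul_left ht (units_inv_left ht hyz)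

theorem of_mul_of_isUnit_left (hx : IsUnit x) (hxy : TCommute t e (x * y) z)
    (hxz : TCommute t f x z) : TCommute t (e - f) y z := by
  obtain ⟨u, rfl⟩ := hx
  simpa [sub_eq_neg_add, ← mul_assoc] using (units_inv_left ht hxz).mul_left ht hxy

theorem list_prod_left {ι : Type*} (l : List ι) {e : ι → ℤ} {g : ι → R}
    (h : ∀ i ∈ l, TCommute t (e i) (g i) z) : TCommute t (l.map e).sum (l.map g).prod z := by
  induction l with
  | nil => simp [TCommute]
  | cons a l ih =>
    simpa using (h a List.mem_cons_self).mul_left ht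
      (ih fun i hi => h i (List.mem_cons_of_mem a hi))

end TCommute

section QSystem

variable {t : Rˣ} {C L : Matrix (Fin r) (Fin r) ℤ} {Q : Fin r → ℤ → R}

theorem two_mul_eq_sum_neighbors (hdiag : ∀ α, C α α = 2)
    (hoff : ∀ α β, α ≠ β → C α β = 0 ∨ C α β = -1) {α β : Fin r} (hCL : (C * L) α β = 0) :
    2 * L α β = ∑ γ ∈ univ.filter (fun γ => C α γ = -1), L γ β := by
  have hrow : ∀ γ, C α γ * L γ β =
      (if α = γ then 2 * L γ β else 0) - (if C α γ = -1 then L γ β else 0) := by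
    intro γ
    by_cases h : α = γ
    · subst h; simp [hdiag]
    · rcases hoff α γ h with h' | h' <;> simp [h, h']
  rw [Matrix.mul_apply] at hCL
  simp only [hrow, sum_sub_distrib, sum_ite_eq, mem_univ, if_true, ← sum_filter] at hCL
  linarith

theorem TCommute.nbrProd_left (ht : ∀ a : R, Commute (t : R) a) {α : Fin r} {n : ℤ} {z : R}
    {e : Fin r → ℤ} (h : ∀ γ, C α γ = -1 → TCommute t (e γ) (Q γ n) z) :
    TCommute t (∑ γ ∈ univ.filter (fun γ => C α γ = -1), e γ) (nbrProd C Q α n) z := by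
  have := TCommute.list_prod_left ht ((univ.filter (fun γ => C α γ = -1)).sort (· ≤ ·))
    (e := e) (g := fun γ => Q γ n) (fun γ hγ => h γ (by simpa using hγ))
  rwa [← Multiset.sum_coe, ← Multiset.map_coe, sort_eq] at this

theorem TCommute.succ_mul_pred (ht : ∀ a : R, Commute (t : R) a) {α : Fin r} {n k e : ℤ}
    {z : R} (hsys : ((t ^ k : Rˣ) : R) * (Q α (n + 1) * Q α (n - 1)) =
      Q α n ^ 2 - nbrProd C Q α n)
    (hQ : TCommute t e (Q α n) z) (hP : TCommute t (2 * e) (nbrProd C Q α n) z) :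
    TCommute t (2 * e) (Q α (n + 1) * Q α (n - 1)) z := by
  rw [← TCommute.units_zpow_mul_left_iff ht k, hsys, pow_two, two_mul]
  exact (hQ.mul_left ht hQ).sub_left (two_mul e ▸ hP)

end QSystem

section InitialData

def TCommuteAt (t : Rˣ) (L : Matrix (Fin r) (Fin r) ℤ) (Q : Fin r → ℤ → R)
    (p q : Fin r × ℤ) : Prop :=
  TCommute t (L p.1 q.1 * (q.2 - p.2)) (Q p.1 p.2) (Q q.1 q.2)

def TCommuteOn (t : Rˣ) (L : Matrix (Fin r) (Fin r) ℤ) (Q : Fin r → ℤ → R)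
    (s : Set (Fin r × ℤ)) : Prop :=
  ∀ p ∈ s, ∀ q ∈ s, TCommuteAt t L Q p q

def initialData (m : Fin r → ℤ) : Set (Fin r × ℤ) :=
  {p | p.2 = m p.1 ∨ p.2 = m p.1 + 1}

def IsMotzkin (C : Matrix (Fin r) (Fin r) ℤ) (m : Fin r → ℤ) : Prop :=
  ∀ α β, C α β = -1 → |m α - m β| ≤ 1

variable {t : Rˣ} {C L : Matrix (Fin r) (Fin r) ℤ} {Q : Fin r → ℤ → R}

theorem TCommuteAt.refl (p : Fin r × ℤ) : TCommuteAt t L Q p p := by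
  simpa [TCommuteAt] using TCommute.refl (t := t) (Q p.1 p.2)

theorem TCommuteAt.symm (hL : L.IsSymm) {p q : Fin r × ℤ} (h : TCommuteAt t L Q p q) :
    TCommuteAt t L Q q p := by
  unfold TCommuteAt
  convert TCommute.symm h using 2
  rw [hL.apply]
  ring

theorem TCommuteOn.of_subset_insert (hL : L.IsSymm) {s s' : Set (Fin r × ℤ)}
    {a : Fin r × ℤ} (h : TCommuteOn t L Q s) (hsub : s' ⊆ insert a s)
    (ha : ∀ q ∈ s', q ∈ s → TCommuteAt t L Q a q) : TCommuteOn t L Q s' := by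
  intro p hp q hq
  rcases hsub hp with rfl | hp' <;> rcases hsub hq with rfl | hq'
  · exact .refl _
  · exact ha q hq hq'
  · exact (ha p hp hp').symm hL
  · exact h p hp' q hq'

end InitialData

section Motzkin

variable {C : Matrix (Fin r) (Fin r) ℤ} {m : Fin r → ℤ}

theorem IsMotzkin.update (hC : C.IsSymm) (hm : IsMotzkin C m) {α : Fin r} {v : ℤ}
    (h : ∀ γ, C α γ = -1 → |m γ - v| ≤ 1) : IsMotzkin C (update m α v) := by
  intro β γ hβγ
  rcases eq_or_ne β α with rfl | hβ <;> rcases eq_or_ne γ β with rfl | hγ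
  · simp
  · simpa [hγ, abs_sub_comm] using h γ hβγ
  · simp
  · rcases eq_or_ne γ α with rfl | hγα
    · simpa [hβ] using h β (hC.apply γ β ▸ hβγ)
    · simpa [hβ, hγα] using hm β γ hβγ

theorem IsMotzkin.exists_extremal (hm : IsMotzkin C m) (hm0 : m ≠ 0) :
    ∃ α, (0 < m α ∧ ∀ γ, C α γ = -1 → m γ = m α - 1 ∨ m γ = m α) ∨
      (m α < 0 ∧ ∀ γ, C α γ = -1 → m γ = m α ∨ m γ = m α + 1) := by
  obtain ⟨β, hβ⟩ := Function.ne_iff.mp hm0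
  obtain ⟨α, -, hmax⟩ := exists_max_image univ (fun γ => (m γ).natAbs) ⟨β, mem_univ β⟩
  have hnbr : ∀ γ, C α γ = -1 → |m α - m γ| ≤ 1 ∧ (m γ).natAbs ≤ (m α).natAbs :=
    fun γ hγ => ⟨hm α γ hγ, hmax γ (mem_univ γ)⟩
  have hα : m α ≠ 0 := by
    have := hmax β (mem_univ β)
    simp only [Pi.zero_apply] at hβ
    omega
  refine ⟨α, ?_⟩
  rcases lt_or_gt_of_ne hα with hneg | hpos
  · exact .inr ⟨hneg, fun γ hγ => by have := hnbr γ hγ; rw [abs_le] at this; omega⟩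
  · exact .inl ⟨hpos, fun γ hγ => by have := hnbr γ hγ; rw [abs_le] at this; omega⟩

theorem sum_natAbs_update_lt {ι : Type*} [Fintype ι] [DecidableEq ι] {m : ι → ℤ} {α : ι}
    {v : ℤ} (h : v.natAbs < (m α).natAbs) :
    ∑ γ, (update m α v γ).natAbs < ∑ γ, (m γ).natAbs := by
  refine sum_lt_sum (fun γ _ => ?_) ⟨α, mem_univ α, by simpa using h⟩
  rcases eq_or_ne γ α with rfl | hγ
  · simpa using h.le
  · simp [hγ]

end Motzkin

section Mutation

variable {t : Rˣ} {C L : Matrix (Fin r) (Fin r) ℤ} {Q : Fin r → ℤ → R}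
  (ht : ∀ a : R, Commute (t : R) a) (hL : L.IsSymm) (hdiag : ∀ α, C α α = 2)
  (hoff : ∀ α β, α ≠ β → C α β = 0 ∨ C α β = -1)
  (hCL : ∀ α β, α ≠ β → (C * L) α β = 0) (hunit : ∀ α n, IsUnit (Q α n))
  (hsys : ∀ α (n : ℤ), ((t ^ L α α : Rˣ) : R) * (Q α (n + 1) * Q α (n - 1)) =
    Q α n ^ 2 - nbrProd C Q α n)

section
include ht hdiag hoff hCL hsys

theorem TCommuteAt.succ_mul_pred {α : Fin r} {n : ℤ} {q : Fin r × ℤ}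
    (hn : TCommuteAt t L Q (α, n) q) (hnbr : ∀ γ, C α γ = -1 → TCommuteAt t L Q (γ, n) q)
    (hq : q.1 ≠ α ∨ q.2 = n) :
    TCommute t (2 * (L α q.1 * (q.2 - n))) (Q α (n + 1) * Q α (n - 1)) (Q q.1 q.2) := by
  have hsum : ∑ γ ∈ univ.filter (fun γ => C α γ = -1), L γ q.1 * (q.2 - n) =
      2 * (L α q.1 * (q.2 - n)) := by
    rw [← sum_mul]
    rcases hq with hne | heq
    · rw [← two_mul_eq_sum_neighbors hdiag hoff (hCL α q.1 hne.symm), mul_assoc]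
    · simp [heq]
  exact TCommute.succ_mul_pred ht (hsys α n) hn (hsum ▸ TCommute.nbrProd_left ht hnbr)

include hunit

theorem TCommuteAt.succ_of_pred {α : Fin r} {n : ℤ} {q : Fin r × ℤ}
    (hn : TCommuteAt t L Q (α, n) q) (hpred : TCommuteAt t L Q (α, n - 1) q)
    (hnbr : ∀ γ, C α γ = -1 → TCommuteAt t L Q (γ, n) q) (hq : q.1 ≠ α ∨ q.2 = n) :
    TCommuteAt t L Q (α, n + 1) q := by
  have := (hn.succ_mul_pred ht hdiag hoff hCL hsys hnbr hq).of_mul_of_isUnit_right ht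
    (hunit α (n - 1)) hpred
  unfold TCommuteAt
  convert this using 2
  ring

theorem TCommuteAt.pred_of_succ {α : Fin r} {n : ℤ} {q : Fin r × ℤ}
    (hn : TCommuteAt t L Q (α, n) q) (hsucc : TCommuteAt t L Q (α, n + 1) q)
    (hnbr : ∀ γ, C α γ = -1 → TCommuteAt t L Q (γ, n) q) (hq : q.1 ≠ α ∨ q.2 = n) :
    TCommuteAt t L Q (α, n - 1) q := by
  have := (hn.succ_mul_pred ht hdiag hoff hCL hsys hnbr hq).of_mul_of_isUnit_left ht
    (hunit α (n + 1)) hsucc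
  unfold TCommuteAt
  convert this using 2
  ring

end

include ht hL hdiag hoff hCL hunit hsys

theorem TCommuteOn.initialData_of_update_sub_one {m : Fin r → ℤ} {α : Fin r}
    (hnbr : ∀ γ, C α γ = -1 → m γ = m α - 1 ∨ m γ = m α)
    (h : TCommuteOn t L Q (initialData (update m α (m α - 1)))) :
    TCommuteOn t L Q (initialData m) := by
  refine h.of_subset_insert hL (a := (α, m α + 1)) ?_ fun q hq hq' => ?_
  · rintro ⟨β, b⟩ hb
    by_cases hβ : β = α
    · subst hβ; simp_all [initialData]; omega
    · simp_all [initialData]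
  · have mem : ∀ γ, m γ = m α - 1 ∨ m γ = m α →
        (γ, m α) ∈ initialData (update m α (m α - 1)) := by
      intro γ hγ
      by_cases hγα : γ = α
      · subst hγα; simp [initialData]
      · simp [initialData, hγα]; omega
    refine (h _ (mem α (.inr rfl)) q hq').succ_of_pred ht hdiag hoff hCL hunit hsys
      (h _ ?_ q hq') (fun γ hγ => h _ (mem γ (hnbr γ hγ)) q hq') ?_
    · simp [initialData]
    · rcases q with ⟨β, b⟩
      by_cases hβ : β = α
      · subst hβ; simp_all [initialData]; omega
      · exact .inl hβ

theorem TCommuteOn.initialData_of_update_add_one {m : Fin r → ℤ} {α : Fin r}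
    (hnbr : ∀ γ, C α γ = -1 → m γ = m α ∨ m γ = m α + 1)
    (h : TCommuteOn t L Q (initialData (update m α (m α + 1)))) :
    TCommuteOn t L Q (initialData m) := by
  refine h.of_subset_insert hL (a := (α, m α)) ?_ fun q hq hq' => ?_
  · rintro ⟨β, b⟩ hb
    by_cases hβ : β = α
    · subst hβ; simp_all [initialData]; omega
    · simp_all [initialData]
  · have mem : ∀ γ, m γ = m α ∨ m γ = m α + 1 →
        (γ, m α + 1) ∈ initialData (update m α (m α + 1)) := by
      intro γ hγ
      by_cases hγα : γ = α
      · subst hγα; simp [initialData]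
      · simp [initialData, hγα]; omega
    have := (h _ (mem α (.inl rfl)) q hq').pred_of_succ ht hdiag hoff hCL hunit hsys
      (h _ ?_ q hq') (fun γ hγ => h _ (mem γ (hnbr γ hγ)) q hq') ?_
    · simpa using this
    · simp [initialData]
    · rcases q with ⟨β, b⟩
      by_cases hβ : β = α
      · subst hβ; simp_all [initialData]; omega
      · exact .inl hβ

theorem TCommuteOn.initialData_of_isMotzkin (hC : C.IsSymm)
    (h0 : TCommuteOn t L Q (initialData 0)) {m : Fin r → ℤ} (hm : IsMotzkin C m) :
    TCommuteOn t L Q (initialData m) := by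
  induction hN : ∑ γ, (m γ).natAbs using Nat.strong_induction_on generalizing m with
  | _ N ih =>
  by_cases hm0 : m = 0
  · exact hm0 ▸ h0
  obtain ⟨α, ⟨hpos, hnbr⟩ | ⟨hneg, hnbr⟩⟩ := hm.exists_extremal hm0
  · refine initialData_of_update_sub_one ht hL hdiag hoff hCL hunit hsys hnbr
      (ih _ (hN ▸ sum_natAbs_update_lt (by omega)) (hm.update hC fun γ hγ => ?_) rfl)
    rcases hnbr γ hγ with h | h <;> rw [h, abs_le] <;> omega
  · refine initialData_of_update_add_one ht hL hdiag hoff hCL hunit hsys hnbr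
      (ih _ (hN ▸ sum_natAbs_update_lt (by omega)) (hm.update hC fun γ hγ => ?_) rfl)
    rcases hnbr γ hγ with h | h <;> rw [h, abs_le] <;> omega

end Mutation

end

theorem quantum_Qsystem_commutation_general
    {R : Type*} [Ring R] (r : ℕ) (C : Matrix (Fin r) (Fin r) ℤ)
    -- `C` is the Cartan matrix of a simply-laced simple Lie algebra:
    (hsym : C.IsSymm)
    (hdiag : ∀ α, C α α = 2)
    (hoff : ∀ α β, α ≠ β → C α β = 0 ∨ C α β = -1)
    -- `t` is a central unit of `R`:
    (t : Rˣ) (hcentral : ∀ x : R, (t : R) * x = x * (t : R))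
    -- the `Q_{α,n}` are invertible elements of `R`:
    (Q : Fin r → ℤ → R) (hunit : ∀ α n, IsUnit (Q α n))
    -- satisfying the quantum Q-system (`λ = δ C⁻¹ = adjugate C`):
    (hsys : ∀ α (n : ℤ),
      ((t ^ C.adjugate α α : Rˣ) : R) * (Q α (n + 1) * Q α (n - 1)) =
        Q α n ^ 2 - nbrProd C Q α n)
    -- and the initial commutation relations for `m, n ∈ {0,1}`:
    (hcomm : ∀ α β : Fin r, ∀ m n : ℤ, (m = 0 ∨ m = 1) → (n = 0 ∨ n = 1) →
      Q α n * Q β m = ((t ^ (C.adjugate α β * (m - n)) : Rˣ) : R) * (Q β m * Q α n))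
    -- `m⃗` is a generalized Motzkin path:
    (mv : Fin r → ℤ) (hmv : ∀ α β, C α β = -1 → |mv α - mv β| ≤ 1) :
    ∀ α β : Fin r, ∀ ε ε' : ℤ, (ε = 0 ∨ ε = 1) → (ε' = 0 ∨ ε' = 1) →
      Q α (mv α + ε) * Q β (mv β + ε') =
        ((t ^ (C.adjugate α β * ((mv β + ε') - (mv α + ε))) : Rˣ) : R) *
          (Q β (mv β + ε') * Q α (mv α + ε)) := by
  intro α β ε ε' hε hε'
  have hCL : ∀ α β, α ≠ β → (C * C.adjugate) α β = 0 := fun α β hαβ => by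
    simp [Matrix.mul_adjugate, hαβ]
  have h0 : TCommuteOn t C.adjugate Q (initialData 0) := fun p hp q hq =>
    hcomm p.1 q.1 q.2 p.2 (by simpa [initialData] using hq) (by simpa [initialData] using hp)
  refine TCommuteOn.initialData_of_isMotzkin hcentral hsym.adjugate hdiag hoff hCL hunit hsys
    hsym h0 hmv (α, mv α + ε) ?_ (β, mv β + ε') ?_
  · rcases hε with rfl | rfl <;> simp [initialData]
  · rcases hε' with rfl | rfl <;> simp [initialData]

theorem quantum_Qsystem_commutation
    {R : Type*} [Ring R] (r : ℕ) (C : Matrix (Fin r) (Fin r) ℤ)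
    -- `C` is the Cartan matrix of a simply-laced simple Lie algebra:
    (hsym : C.IsSymm)
    (hdiag : ∀ α, C α α = 2)
    (hoff : ∀ α β, α ≠ β → C α β = 0 ∨ C α β = -1)
    (hpos : ∀ v : Fin r → ℤ, v ≠ 0 → 0 < ∑ α, ∑ β, v α * C α β * v β)
    (hconn : ∀ α β : Fin r, Relation.ReflTransGen (fun a b => C a b = -1) α β)
    -- `t` is a central unit of `R`:
    (t : Rˣ) (hcentral : ∀ x : R, (t : R) * x = x * (t : R))
    -- the `Q_{α,n}` are invertible elements of `R`:
    (Q : Fin r → ℤ → R) (hunit : ∀ α n, IsUnit (Q α n))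
    -- satisfying the quantum Q-system (`λ = δ C⁻¹ = adjugate C`):
    (hsys : ∀ α (n : ℤ),
      ((t ^ C.adjugate α α : Rˣ) : R) * (Q α (n + 1) * Q α (n - 1)) =
        Q α n ^ 2 - nbrProd C Q α n)
    -- and the initial commutation relations for `m, n ∈ {0,1}`:
    (hcomm : ∀ α β : Fin r, ∀ m n : ℤ, (m = 0 ∨ m = 1) → (n = 0 ∨ n = 1) →
      Q α n * Q β m = ((t ^ (C.adjugate α β * (m - n)) : Rˣ) : R) * (Q β m * Q α n))
    -- `m⃗` is a generalized Motzkin path: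
    (mv : Fin r → ℤ) (hmv : ∀ α β, C α β = -1 → |mv α - mv β| ≤ 1) :
    ∀ α β : Fin r, ∀ ε ε' : ℤ, (ε = 0 ∨ ε = 1) → (ε' = 0 ∨ ε' = 1) →
      Q α (mv α + ε) * Q β (mv β + ε') =
        ((t ^ (C.adjugate α β * ((mv β + ε') - (mv α + ε))) : Rˣ) : R) *
          (Q β (mv β + ε') * Q α (mv α + ε)) :=
  quantum_Qsystem_commutation_general r C hsym hdiag hoff t hcentral Q hunit hsys hcomm mv hmv
end

section
/- For all α ≠ γ in {1,…,r}, the solutions of the quantum Q-system satisfy the commutation relation Q_{α,−1} · Q_{γ,1} = t^{2λ_{αγ}} · Q_{γ,1} · Q_{α,−1}. -/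
/-! Multiplying the Q-system relation at `n = 0` on the right by `Q_{γ,1}`, every term on the
right-hand side `Q_{α,0}² − ∏_{β ∼ α} Q_{β,0}` is `t`-commuted past `Q_{γ,1}` with the same power
`t^{2λ_{αγ}}`: for the square this is the initial relation twice, and for the neighbour product the
exponents add up to `∑_{β ∼ α} λ_{βγ} = 2λ_{αγ}`, which is the `(α, γ)` entry of `C · adj C = δ · 1`.
Since `Q_{α,1}` commutes with `Q_{γ,1}`, cancelling `t^{λ_{αα}} Q_{α,1}` leaves the claim. -/

open scoped BigOperators

namespace Matrix

variable {n : Type*} [Fintype n] [DecidableEq n]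

theorem sum_adjugate_filter_eq_neg_one {C : Matrix n n ℤ} {α γ : n} (hαγ : α ≠ γ)
    (hdiag : C α α = 2) (hoff : ∀ β, α ≠ β → C α β = 0 ∨ C α β = -1) :
    ∑ β ∈ Finset.univ.filter (fun β => C α β = -1), C.adjugate β γ = 2 * C.adjugate α γ := by
  have hterm : ∀ β, C α β * C.adjugate β γ =
      (if α = β then 2 * C.adjugate α γ else 0) - (if C α β = -1 then C.adjugate β γ else 0) := by
    intro β
    by_cases hβ : α = β
    · subst hβ; simp [hdiag]
    · rcases hoff β hβ with h | h <;> simp [hβ, h]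
  have hzero := congrFun (congrFun C.mul_adjugate α) γ
  rw [mul_apply, smul_apply, one_apply_ne hαγ, smul_zero,
    Finset.sum_congr rfl fun β _ => hterm β, Finset.sum_sub_distrib, Finset.sum_ite_eq,
    if_pos (Finset.mem_univ _), ← Finset.sum_filter] at hzero
  linarith

end Matrix

def QCommute {R : Type*} [Ring R] (t : Rˣ) (k : ℤ) (x y : R) : Prop :=
  x * y = ((t ^ k : Rˣ) : R) * (y * x)

namespace QCommute

variable {R : Type*} [Ring R] {t : Rˣ} {k l : ℤ} {x y z : R}

theorem one_left : QCommute t 0 1 z := by simp [QCommute]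

theorem sub_left (hx : QCommute t k x z) (hy : QCommute t k y z) :
    QCommute t k (x - y) z := by
  rw [QCommute, sub_mul, hx, hy, ← mul_sub, ← mul_sub]

theorem mul_left (ht : ∀ x : R, Commute (t : R) x) (hx : QCommute t k x z)
    (hy : QCommute t l y z) : QCommute t (k + l) (x * y) z := by
  have hc : ∀ (m : ℤ) (w : R), Commute ((t ^ m : Rˣ) : R) w := fun m w => (ht w).units_zpow_left m
  calc x * y * z = ((t ^ l : Rˣ) : R) * (x * z * y) := by
        rw [mul_assoc, hy, (hc l x).symm.left_comm, mul_assoc]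
    _ = ((t ^ (k + l) : Rˣ) : R) * (z * (x * y)) := by
        rw [hx, zpow_add, Units.val_mul, mul_assoc, mul_assoc, (hc l _).left_comm, mul_assoc]

theorem list_prod_left (ht : ∀ x : R, Commute (t : R) x) {ι : Type*} (f : ι → R) (g : ι → ℤ)
    (h : ∀ i, QCommute t (g i) (f i) z) :
    ∀ L : List ι, QCommute t (L.map g).sum (L.map f).prod z
  | [] => one_left
  | i :: L => by
    simpa only [List.map_cons, List.sum_cons, List.prod_cons] using
      (h i).mul_left ht (list_prod_left ht f g h L)

theorem of_mul_left (ht : ∀ x : R, Commute (t : R) x) {u : R} (hu : IsUnit u)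
    (huz : Commute u z) (h : QCommute t k (u * x) z) : QCommute t k x z := by
  refine hu.mul_left_cancel ?_
  calc u * (x * z) = ((t ^ k : Rˣ) : R) * (z * (u * x)) := by rw [← mul_assoc, h]
    _ = u * (((t ^ k : Rˣ) : R) * (z * x)) := by
        rw [← mul_assoc z, ← huz.eq, mul_assoc, ((ht u).units_zpow_left k).left_comm]

theorem nbrProd_left (ht : ∀ x : R, Commute (t : R) x) {r : ℕ} (C : Matrix (Fin r) (Fin r) ℤ)
    (Q : Fin r → ℤ → R) (α : Fin r) (n : ℤ) (g : Fin r → ℤ)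
    (h : ∀ β, QCommute t (g β) (Q β n) z) :
    QCommute t (∑ β ∈ Finset.univ.filter (fun β => C α β = -1), g β) (nbrProd C Q α n) z := by
  have hsum := ((Finset.sort_perm_toList
    (Finset.univ.filter (fun β => C α β = -1)) (· ≤ ·)).map g).sum_eq
  rw [← Finset.sum_map_toList, ← hsum]
  exact list_prod_left ht (fun β => Q β n) g h _

end QCommute

theorem quantum_Qsystem_minus_one_commutation_general
    {R : Type*} [Ring R] (r : ℕ) (C : Matrix (Fin r) (Fin r) ℤ)
    -- `C` is the Cartan matrix of a simply-laced simple Lie algebra: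
    (hdiag : ∀ α, C α α = 2)
    (hoff : ∀ α β, α ≠ β → C α β = 0 ∨ C α β = -1)
    -- `t` is a central unit of `R`:
    (t : Rˣ) (hcentral : ∀ x : R, (t : R) * x = x * (t : R))
    -- the `Q_{α,n}` are invertible elements of `R`:
    (Q : Fin r → ℤ → R) (hunit : ∀ α n, IsUnit (Q α n))
    -- satisfying the quantum Q-system (`λ = δ C⁻¹ = adjugate C`):
    (hsys : ∀ α (n : ℤ),
      ((t ^ C.adjugate α α : Rˣ) : R) * (Q α (n + 1) * Q α (n - 1)) =
        Q α n ^ 2 - nbrProd C Q α n)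
    -- and the initial commutation relations for `m, n ∈ {0,1}`:
    (hcomm : ∀ α β : Fin r, ∀ m n : ℤ, (m = 0 ∨ m = 1) → (n = 0 ∨ n = 1) →
      Q α n * Q β m = ((t ^ (C.adjugate α β * (m - n)) : Rˣ) : R) * (Q β m * Q α n)) :
    ∀ α γ : Fin r, α ≠ γ →
      Q α (-1) * Q γ 1 =
        ((t ^ (2 * C.adjugate α γ) : Rˣ) : R) * (Q γ 1 * Q α (-1)) := by
  intro α γ hαγ
  have h₀₁ : ∀ β, QCommute t (C.adjugate β γ) (Q β 0) (Q γ 1) := fun β => by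
    simpa [QCommute] using hcomm β γ 1 0 (.inr rfl) (.inl rfl)
  have h₁₁ : Commute (Q α 1) (Q γ 1) := by
    simpa [Commute, SemiconjBy] using hcomm α γ 1 1 (.inr rfl) (.inr rfl)
  have hsq : QCommute t (2 * C.adjugate α γ) (Q α 0 ^ 2) (Q γ 1) := by
    rw [sq, two_mul]
    exact (h₀₁ α).mul_left hcentral (h₀₁ α)
  have hnbr : QCommute t (2 * C.adjugate α γ) (nbrProd C Q α 0) (Q γ 1) := by
    rw [← Matrix.sum_adjugate_filter_eq_neg_one hαγ (hdiag α) (hoff α)]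
    exact QCommute.nbrProd_left hcentral C Q α 0 _ h₀₁
  have hrel : QCommute t (2 * C.adjugate α γ)
      (((t ^ C.adjugate α α : Rˣ) : R) * Q α 1 * Q α (-1)) (Q γ 1) := by
    rw [mul_assoc, show Q α 1 * Q α (-1) = Q α (0 + 1) * Q α (0 - 1) by norm_num, hsys]
    exact hsq.sub_left hnbr
  exact hrel.of_mul_left hcentral ((Units.isUnit _).mul (hunit α 1))
    ((Commute.units_zpow_left (hcentral _) _).mul_left h₁₁)

theorem quantum_Qsystem_minus_one_commutation
    {R : Type*} [Ring R] (r : ℕ) (C : Matrix (Fin r) (Fin r) ℤ)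
    -- `C` is the Cartan matrix of a simply-laced simple Lie algebra:
    (hsym : C.IsSymm)
    (hdiag : ∀ α, C α α = 2)
    (hoff : ∀ α β, α ≠ β → C α β = 0 ∨ C α β = -1)
    (hpos : ∀ v : Fin r → ℤ, v ≠ 0 → 0 < ∑ α, ∑ β, v α * C α β * v β)
    (hconn : ∀ α β : Fin r, Relation.ReflTransGen (fun a b => C a b = -1) α β)
    -- `t` is a central unit of `R`:
    (t : Rˣ) (hcentral : ∀ x : R, (t : R) * x = x * (t : R))
    -- the `Q_{α,n}` are invertible elements of `R`:
    (Q : Fin r → ℤ → R) (hunit : ∀ α n, IsUnit (Q α n))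
    -- satisfying the quantum Q-system (`λ = δ C⁻¹ = adjugate C`):
    (hsys : ∀ α (n : ℤ),
      ((t ^ C.adjugate α α : Rˣ) : R) * (Q α (n + 1) * Q α (n - 1)) =
        Q α n ^ 2 - nbrProd C Q α n)
    -- and the initial commutation relations for `m, n ∈ {0,1}`:
    (hcomm : ∀ α β : Fin r, ∀ m n : ℤ, (m = 0 ∨ m = 1) → (n = 0 ∨ n = 1) →
      Q α n * Q β m = ((t ^ (C.adjugate α β * (m - n)) : Rˣ) : R) * (Q β m * Q α n)) :
    ∀ α γ : Fin r, α ≠ γ →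
      Q α (-1) * Q γ 1 =
        ((t ^ (2 * C.adjugate α γ) : Rˣ) : R) * (Q γ 1 * Q α (-1)) :=
  quantum_Qsystem_minus_one_commutation_general r C hdiag hoff t hcentral Q hunit hsys hcomm
end

section
/- The solutions of the A₁ quantum Q-system satisfy the linear recursion Q_{n+1} + t·Q_{n−1} = (Q_1·Q_0^{−1} + t·Q_{−1}·Q_0^{−1})·Q_n for all n ∈ ℤ; in other words, the element Q_1 Q_0^{−1} + t Q_{−1} Q_0^{−1} acts as a conserved quantity of the recursion. -/
/-!
The quantity `X n = Q (n + 1) + t Q (n - 1)` satisfies the twisted relation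
`X n · Q (n + 1) = t · X (n + 1) · Q n`: expanding, this is the Q-system at `n + 1` added to the
Q-system at `n` read in the opposite order, `t Q (n - 1) Q (n + 1) = t² Q n ² - 1`, which follows
from the commutation relations. Since `Q n Q (n + 1) = t Q (n + 1) Q n` twists in the same way,
`X n = C · Q n` holds for one `n` if and only if it holds for `n + 1`; at `n = 0` it is the
definition of `C`.
-/

theorem Int.forall_of_iff_add_one {p : ℤ → Prop} (hp : ∀ n, p n ↔ p (n + 1)) (h0 : p 0)
    (n : ℤ) : p n := by
  induction n using Int.induction_on with
  | zero => exact h0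
  | succ k ih => exact (hp k).1 ih
  | pred k ih => exact (hp _).2 (by rwa [sub_add_cancel])

theorem eq_mul_iff_of_mul_eq_central_mul {M : Type*} [Monoid M] {t a b x y : M} (c : M)
    (ht : ∀ z, t * z = z * t) (ht' : IsLeftRegular t) (ha : IsRightRegular a)
    (hb : IsRightRegular b) (hab : a * b = t * (b * a)) (hxy : x * b = t * (y * a)) :
    x = c * a ↔ y = c * b := by
  have hcab : c * (a * b) = t * (c * b * a) := by
    rw [hab, ← mul_assoc c t, ← ht]; simp only [mul_assoc]
  constructor
  · rintro rfl
    apply ha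
    apply ht'
    simp only [← hxy, mul_assoc, hcab]
  · rintro rfl
    apply hb
    simp only [hxy, mul_assoc, hcab]

theorem mul_rev_eq_of_mul_eq_sq_sub_one {R : Type*} [Ring R] {t a b c : R}
    (ht : ∀ z, t * z = z * t) (ha : IsRightRegular a) (hab : a * b = t * (b * a))
    (h : t * (c * a) = b ^ 2 - 1) : t * (a * c) = t ^ 2 * b ^ 2 - 1 := by
  apply ha
  have hab2 : a * b ^ 2 = t ^ 2 * b ^ 2 * a :=
    calc a * b ^ 2 = t * (b * a) * b := by rw [sq, ← mul_assoc, hab]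
      _ = t * b * (a * b) := by simp only [mul_assoc]
      _ = t ^ 2 * b ^ 2 * a := by
        rw [hab, mul_assoc t b, ← mul_assoc b t, ← ht, sq, sq]; simp only [mul_assoc]
  calc t * (a * c) * a = a * (t * (c * a)) := by
        rw [← mul_assoc a t, ← ht]; simp only [mul_assoc]
    _ = (t ^ 2 * b ^ 2 - 1) * a := by rw [h, mul_sub, hab2, mul_one, sub_mul, one_mul]

theorem qsystem_twisted_step {R : Type*} [Ring R] {t : R} {Q : ℤ → R}
    (ht : ∀ x, t * x = x * t) (hunit : ∀ n, IsUnit (Q n))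
    (hsys : ∀ n : ℤ, t * (Q (n + 1) * Q (n - 1)) = Q n ^ 2 - 1)
    (hcomm : ∀ n : ℤ, Q n * Q (n + 1) = t * (Q (n + 1) * Q n)) (n : ℤ) :
    (Q (n + 1) + t * Q (n - 1)) * Q (n + 1) =
      t * ((Q (n + 1 + 1) + t * Q (n + 1 - 1)) * Q n) := by
  have hrev : t * (Q (n - 1) * Q (n + 1)) = t ^ 2 * Q n ^ 2 - 1 := by
    refine mul_rev_eq_of_mul_eq_sq_sub_one ht (hunit _).isRegular.right ?_ (hsys n)
    simpa only [sub_add_cancel] using hcomm (n - 1)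
  have hfwd := hsys (n + 1)
  rw [add_sub_cancel_right] at hfwd
  calc (Q (n + 1) + t * Q (n - 1)) * Q (n + 1)
      = Q (n + 1) ^ 2 + t * (Q (n - 1) * Q (n + 1)) := by rw [add_mul, sq, mul_assoc]
    _ = t * (Q (n + 1 + 1) * Q n) + t ^ 2 * Q n ^ 2 := by rw [hrev, hfwd]; abel
    _ = t * ((Q (n + 1 + 1) + t * Q (n + 1 - 1)) * Q n) := by
      rw [add_sub_cancel_right, add_mul, mul_add, sq, sq, mul_assoc t, mul_assoc t]

theorem A1_quantum_Qsystem_linear_recursion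
    {R : Type*} [Ring R]
    -- `t` is a central unit of `R`:
    (t : Rˣ) (hcentral : ∀ x : R, (t : R) * x = x * (t : R))
    -- the `Q_n` are invertible elements of `R`:
    (Q : ℤ → R) (hunit : ∀ n, IsUnit (Q n))
    -- satisfying the A₁ quantum Q-system:
    (hsys : ∀ n : ℤ, (t : R) * (Q (n + 1) * Q (n - 1)) = Q n ^ 2 - 1)
    -- and the commutation relations:
    (hcomm : ∀ n : ℤ, Q n * Q (n + 1) = (t : R) * (Q (n + 1) * Q n)) :
    ∀ n : ℤ,
      Q (n + 1) + (t : R) * Q (n - 1) =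
        (Q 1 * Ring.inverse (Q 0) + (t : R) * (Q (-1) * Ring.inverse (Q 0))) * Q n := by
  intro n
  set C := Q 1 * Ring.inverse (Q 0) + (t : R) * (Q (-1) * Ring.inverse (Q 0))
  have hbase : Q (0 + 1) + (t : R) * Q (0 - 1) = C * Q 0 := by
    simp only [C, add_mul, mul_assoc, Ring.inverse_mul_cancel _ (hunit 0), mul_one, zero_add,
      zero_sub]
  refine Int.forall_of_iff_add_one (p := fun n => Q (n + 1) + (t : R) * Q (n - 1) = C * Q n)
    (fun n => ?_) hbase n
  exact eq_mul_iff_of_mul_eq_central_mul C hcentral t.isRegular.left (hunit n).isRegular.right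
    (hunit (n + 1)).isRegular.right (hcomm n) (qsystem_twisted_step hcentral hunit hsys hcomm n)
end

section
/- Normalization of the restricted fermionic sum on a single Kirillov–Reshetikhin weight (A₁): for all integers k ≥ m ≥ 1 and every ℓ ∈ ℤ_{≥0}, taking n = e_m ∈ ℤ_{≥0}^k (the vector with n_i = δ_{i,m}), one has M^{(k)}_{ℓ, e_m} = 1 if ℓ = m and M^{(k)}_{ℓ, e_m} = 0 otherwise. -/
/-!
# Statement 19: normalization of the restricted A₁ fermionic sum on a single
Kirillov–Reshetikhin weight

For `k ≥ m ≥ 1` and `ℓ ≥ 0`, with `n = e_m` (the `m`-th unit vector):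
`M^{(k)}_{ℓ, e_m} = δ_{ℓ,m}`.
-/

open scoped BigOperators Classical

noncomputable section

/-- The indeterminate `q`, generating the field `ℚ(q)`. -/
def qV : RatFunc ℚ := RatFunc.X

/-- The generalized q-binomial coefficient `[a+b, a]_q = ∏_{i=1}^{a} (1−q^{b+i})/(1−q^i)`,
as an element of `ℚ(q)`. -/
def qbin (b : ℤ) (a : ℕ) : RatFunc ℚ :=
  ∏ i ∈ Finset.range a, (1 - qV ^ (b + (i : ℤ) + 1)) / (1 - qV ^ ((i : ℤ) + 1))

/-- The restricted (fermionic) sum `M^{(k)}_{ℓ,n}`. -/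
def Msum (k : ℕ) (ℓ : ℤ) (n : Fin k → ℕ) : RatFunc ℚ :=
  ∑ᶠ m : Fin k → ℕ,
    if q0 k ℓ n m = 0 ∧ ∀ j : Fin k, 0 ≤ pP k n m ((j : ℕ) + 1) then
      qV ^ Qquad k n m * ∏ i : Fin k, qbin (pP k n m ((i : ℕ) + 1)) (m i)
    else 0

/-- **Normalization on a single KR weight.** For `1 ≤ m ≤ k` and `ℓ ∈ ℤ_{≥0}`, with
`n = e_m ∈ ℤ_{≥0}^k` (that is, `n_i = δ_{i,m}`), the restricted fermionic sum is
`1` if `ℓ = m` and `0` otherwise. -/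
theorem Msum_single_KR (k m : ℕ) (hm : 1 ≤ m) (hmk : m ≤ k) (ℓ : ℕ) :
    Msum k (ℓ : ℤ) (fun i : Fin k => if (i : ℕ) + 1 = m then 1 else 0) =
      if ℓ = m then 1 else 0 := by
  classical
  have hk : 0 < k := hm.trans hmk
  set n : Fin k → ℕ := fun i : Fin k => if (i : ℕ) + 1 = m then 1 else 0 with hn
  have hpP : ∀ (v : Fin k → ℕ) (j : ℕ),
      pP k n v j = ((min m j : ℕ) : ℤ)
        - 2 * ∑ i : Fin k, ((min ((i:ℕ)+1) j : ℕ) : ℤ) * (v i : ℤ) := by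
    intro v j
    have h1 : ∑ i : Fin k, ((min ((i:ℕ)+1) j : ℕ) : ℤ) * ((n i : ℕ) : ℤ)
        = ((min m j : ℕ) : ℤ) := by
      rw [Finset.sum_eq_single (⟨m-1, by omega⟩ : Fin k)]
      · have hmm : (m - 1 : ℕ) + 1 = m := by omega
        simp [hn, hmm]
      · intro b _ hb
        have hbm : (b:ℕ)+1 ≠ m := by
          intro h
          exact hb (Fin.ext (by simp; omega))
        simp [hn, hbm]
      · intro h; exact absurd (Finset.mem_univ _) h
    calc pP k n v j
        = ∑ i : Fin k, (((min ((i:ℕ)+1) j : ℕ):ℤ) * ((n i : ℕ):ℤ)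
            - 2 * (((min ((i:ℕ)+1) j : ℕ):ℤ) * (v i : ℤ))) := by
          unfold pP; apply Finset.sum_congr rfl; intro i _; push_cast; ring
      _ = _ := by rw [Finset.sum_sub_distrib, ← Finset.mul_sum, h1]
  have hzero : ∀ v : Fin k → ℕ, v ≠ (0 : Fin k → ℕ) →
      (if q0 k (ℓ:ℤ) n v = 0 ∧ ∀ j : Fin k, 0 ≤ pP k n v ((j:ℕ)+1) then
        qV ^ Qquad k n v * ∏ i : Fin k, qbin (pP k n v ((i:ℕ)+1)) (v i) else 0) = 0 := by
    intro v hv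
    rw [if_neg]
    rintro ⟨-, hpos⟩
    have h := hpos ⟨0, hk⟩
    rw [hpP] at h
    simp only [Fin.val_mk, Nat.zero_add] at h
    have hs : 1 ≤ ∑ i : Fin k, (v i : ℤ) := by
      obtain ⟨i, hi⟩ : ∃ i, v i ≠ 0 := by
        by_contra hc; push_neg at hc; exact hv (funext fun i => hc i)
      have : (1 : ℤ) ≤ (v i : ℤ) := by exact_mod_cast Nat.one_le_iff_ne_zero.mpr hi
      calc (1:ℤ) ≤ (v i : ℤ) := this
        _ ≤ ∑ j : Fin k, (v j : ℤ) :=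
          Finset.single_le_sum (f := fun j : Fin k => (v j : ℤ)) (fun j _ => by positivity) (Finset.mem_univ i)
    have hmin1 : (min m 1 : ℕ) = 1 := by omega
    have hsum1 : ∑ i : Fin k, ((min ((i:ℕ)+1) 1 : ℕ) : ℤ) * (v i : ℤ)
        = ∑ i : Fin k, (v i : ℤ) := by
      apply Finset.sum_congr rfl; intro i _
      have : min ((i:ℕ)+1) 1 = 1 := by omega
      rw [this]; push_cast; ring
    rw [hmin1, hsum1] at h
    omega
  rw [Msum, finsum_eq_single _ (0 : Fin k → ℕ) hzero]
  have hpP0 : ∀ j : ℕ, pP k n (0 : Fin k → ℕ) j = ((min m j : ℕ) : ℤ) := by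
    intro j; rw [hpP]; simp
  have hq0 : q0 k (ℓ:ℤ) n (0 : Fin k → ℕ) = (ℓ:ℤ) - (m:ℤ) := by
    rw [q0, hpP0]
    have : min m k = m := min_eq_left hmk
    rw [this]
  have hQ : Qquad k n (0 : Fin k → ℕ) = 0 := by
    unfold Qquad; simp
  by_cases hlm : ℓ = m
  · rw [if_pos, if_pos hlm]
    · rw [hQ]
      simp [qbin, hpP0]
    · constructor
      · rw [hq0, hlm]; ring
      · intro j; rw [hpP0]; positivity
  · rw [if_neg, if_neg hlm]
    rintro ⟨h0, -⟩
    rw [hq0] at h0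
    exact hlm (by exact_mod_cast sub_eq_zero.mp h0)

end
end
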